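/- arXiv:1404.4428 — 2 statements merged into one kernel-verified Lean document; each statement's English description precedes it below -/
import Mathlib

section
/- Let l, k, r, q be positive integers with r ≤ k, q dividing l^{k−r}, l not dividing q, and suppose either r ≥ k/2, or r < k/2 and l^{k−2r} divides q². Let ε ∈ {1, −1} and let m be an integer with gcd(m, l^{k−r}/q) = 1. Then S(ε + l^r·q·m, l^k) = ε·(2/l^k + l^{2r−k}·q² − 3). -/
open scoped Classical
open Finset

/-- The sawtooth function `((x))`. -/
noncomputable def saw (x : ℝ) : ℝ :=
  if ∃ z : ℤ, (z : ℝ) = x then 0 else x - ⌊x⌋ - 1/2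

/-- The classical Dedekind sum `s(m,n)`. -/
noncomputable def ded (m n : ℤ) : ℝ :=
  ∑ k ∈ Finset.Icc (1 : ℤ) n, saw ((k : ℝ) / n) * saw ((m : ℝ) * k / n)

/-- The normalized Dedekind sum `S(m,n) = 12 s(m,n)`. -/
noncomputable def Sded (m n : ℤ) : ℝ := 12 * ded m n


/-! For `a` coprime to `N`, the map `j ↦ a j mod N` permutes `[0, N)`, so polarizing
`((j/N))((aj/N)) = (j/N - 1/2)((aj mod N)/N - 1/2)` gives
`s(a, N) = (N-1)(N-2)/(12N) - (1/(2N²)) ∑_{j<N} (j - (aj mod N))²`.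
Here `N = l^k = c h` with `c = l^r q`, `h = l^(k-r)/q`, and the case hypothesis says `h ∣ c`,
say `c = h e`. For `a = 1 + c b` and `j = s h + u`, the residue `aj mod N` is `j` with the block
index `s` shifted cyclically by `t_u = e (bu mod h)`, so the displacement sum is
`h² c ∑_u t_u (c - t_u)`; as `u ↦ bu mod h` permutes `[0, h)`, it equals `c³h(h²-1)/6`.
The sign `ε = -1` reduces to `ε = 1` because `s(·, N)` is odd. -/

lemma saw_eq_fract (x : ℝ) : saw x = if Int.fract x = 0 then 0 else Int.fract x - 1 / 2 := by
  rw [saw, Int.self_sub_floor]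
  simp only [Int.fract_eq_zero_iff, Set.mem_range]

lemma saw_intCast (z : ℤ) : saw z = 0 := by
  simp [saw_eq_fract]

lemma saw_add_intCast (x : ℝ) (z : ℤ) : saw (x + z) = saw x := by
  simp only [saw_eq_fract, Int.fract_add_intCast]

lemma saw_neg (x : ℝ) : saw (-x) = -saw x := by
  simp only [saw_eq_fract, Int.fract_neg_eq_zero]
  split_ifs with hx
  · simp
  · rw [Int.fract_neg hx]; ring

lemma saw_natCast_div {n N : ℕ} (hN : 0 < N) (hn : n % N ≠ 0) :
    saw ((n : ℝ) / N) = ((n % N : ℕ) : ℝ) / N - 1 / 2 := by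
  have hfract : Int.fract ((n : ℝ) / N) ≠ 0 := by
    rw [Int.fract_div_natCast_eq_div_natCast_mod]; positivity
  rw [saw_eq_fract, if_neg hfract, Int.fract_div_natCast_eq_div_natCast_mod]

lemma ded_neg (a n : ℤ) : ded (-a) n = -ded a n := by
  simp only [ded, ← Finset.sum_neg_distrib, Int.cast_neg, neg_mul, neg_div, saw_neg, mul_neg]

lemma ded_congr {a a' n : ℤ} (h : a ≡ a' [ZMOD n]) : ded a n = ded a' n := by
  obtain ⟨t, ht⟩ := Int.modEq_iff_dvd.1 h
  rcases eq_or_ne n 0 with rfl | hn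
  · simp [ded]
  refine Finset.sum_congr rfl fun j _ => ?_
  have : (a' : ℝ) * j / n = a * j / n + (t * j : ℤ) := by
    rw [show a' = a + n * t by omega]; push_cast; field_simp
  rw [this, saw_add_intCast]

lemma ded_natCast_eq_sum_range (a : ℤ) (N : ℕ) :
    ded a N = ∑ j ∈ range N, saw ((j : ℝ) / N) * saw ((a : ℝ) * j / N) := by
  -- `j ↦ N - j` maps `[0, N)` onto `[1, N]`, and `saw` is odd and 1-periodic.
  symm
  refine Finset.sum_nbij' (fun j => (N - j : ℤ)) (fun k => (N - k).toNat) ?_ ?_ ?_ ?_ ?_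
  · intro j hj; simp only [mem_range, mem_Icc] at hj ⊢; omega
  · intro k hk; simp only [mem_range, mem_Icc] at hk ⊢; omega
  · intro j hj; simp only [mem_range] at hj; omega
  · intro k hk; simp only [mem_Icc] at hk; omega
  · intro j hj
    rcases Nat.eq_zero_or_pos N with rfl | hN
    · simp at hj
    have h1 : (((N - j : ℤ) : ℝ)) / (N : ℤ) = -((j : ℝ) / N) + (1 : ℤ) := by
      push_cast; field_simp; ring
    have h2 : (a : ℝ) * ((N - j : ℤ) : ℝ) / (N : ℤ) = -((a : ℝ) * j / N) + a := by
      push_cast; field_simp; ring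
    rw [h1, h2, saw_add_intCast, saw_add_intCast, saw_neg, saw_neg, neg_mul_neg]

lemma sum_range_mul_mod {M : Type*} [AddCommMonoid M] {a n : ℕ} (ha : a.Coprime n)
    (f : ℕ → M) : ∑ j ∈ range n, f (a * j % n) = ∑ j ∈ range n, f j := by
  have hmaps : ∀ j ∈ range n, a * j % n ∈ range n := fun j hj =>
    mem_range.2 (Nat.mod_lt _ (Nat.zero_lt_of_lt (mem_range.1 hj)))
  have hinj : Set.InjOn (fun j => a * j % n) (range n) := by
    intro i hi j hj hij
    have := Nat.ModEq.cancel_left_of_coprime (Nat.coprime_comm.1 ha) hij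
    rwa [Nat.ModEq, Nat.mod_eq_of_lt (mem_range.1 hi), Nat.mod_eq_of_lt (mem_range.1 hj)] at this
  exact Finset.sum_nbij _ hmaps hinj
    (Finset.surjOn_of_injOn_of_card_le _ hmaps hinj le_rfl) fun _ _ => rfl

lemma sum_range_mul_eq {M : Type*} [AddCommMonoid M] (f : ℕ → M) (g h : ℕ) :
    ∑ j ∈ range (g * h), f j = ∑ s ∈ range g, ∑ u ∈ range h, f (s * h + u) := by
  induction g with
  | zero => simp
  | succ g ih => rw [Nat.succ_mul, Finset.sum_range_add, ih, Finset.sum_range_succ]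

lemma sum_range_natCast {K : Type*} [Field K] [CharZero K] (n : ℕ) :
    ∑ i ∈ range n, (i : K) = n * (n - 1) / 2 := by
  induction n with
  | zero => simp
  | succ n ih => rw [Finset.sum_range_succ, ih]; push_cast; ring

lemma sum_range_natCast_sq {K : Type*} [Field K] [CharZero K] (n : ℕ) :
    ∑ i ∈ range n, (i : K) ^ 2 = n * (n - 1) * (2 * n - 1) / 6 := by
  induction n with
  | zero => simp
  | succ n ih => rw [Finset.sum_range_succ, ih]; push_cast; ring

lemma sum_range_sub_add_mod_sq {g c : ℕ} (hc : c ≤ g) :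
    ∑ s ∈ range g, ((s : ℝ) - ((s + c) % g : ℕ)) ^ 2 = g * c * (g - c) := by
  obtain ⟨d, rfl⟩ := Nat.exists_eq_add_of_le' hc
  have hhead : ∀ s ∈ range d, ((s : ℝ) - ((s + c) % (d + c) : ℕ)) ^ 2 = c ^ 2 := by
    intro s hs
    rw [Nat.mod_eq_of_lt (by simpa using hs)]; push_cast; ring
  have htail : ∀ t ∈ range c,
      (((d + t : ℕ) : ℝ) - ((d + t + c) % (d + c) : ℕ)) ^ 2 = d ^ 2 := by
    intro t ht
    rw [show d + t + c = t + (d + c) by ring, Nat.add_mod_right,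
      Nat.mod_eq_of_lt (by simp at ht; omega)]
    push_cast; ring
  rw [Finset.sum_range_add, Finset.sum_congr rfl hhead, Finset.sum_congr rfl htail]
  simp only [sum_const, card_range, nsmul_eq_mul]
  push_cast; ring

lemma ded_natCast_eq_of_coprime {a N : ℕ} (hN : 0 < N) (ha : a.Coprime N) :
    ded a N = (N - 1) * (N - 2) / (12 * N)
      - (∑ j ∈ range N, ((j : ℝ) - (a * j % N : ℕ)) ^ 2) / (2 * N ^ 2) := by
  have hNR : (N : ℝ) ≠ 0 := by positivity
  set x : ℕ → ℝ := fun j => (j : ℝ) / N - 1 / 2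
  have hterm : ∀ j ∈ range N, saw ((j : ℝ) / N) * saw (((a : ℤ) : ℝ) * j / N)
      = (x j ^ 2 + x (a * j % N) ^ 2 - ((j : ℝ) - (a * j % N : ℕ)) ^ 2 / N ^ 2) / 2
        - if j = 0 then 1 / 4 else 0 := by
    intro j hj
    rcases Nat.eq_zero_or_pos j with rfl | hj0
    · have : saw 0 = 0 := by exact_mod_cast saw_intCast 0
      norm_num [x, this]
    have hjN := mem_range.1 hj
    have haj : a * j % N ≠ 0 := fun h => Nat.not_dvd_of_pos_of_lt hj0 hjN
      ((Nat.Coprime.dvd_mul_left ha.symm).1 (Nat.dvd_of_mod_eq_zero h))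
    have hsaw₁ := saw_natCast_div hN (Nat.mod_eq_of_lt hjN ▸ hj0.ne')
    have hsaw₂ := saw_natCast_div hN haj
    rw [Nat.mod_eq_of_lt hjN] at hsaw₁
    push_cast at hsaw₂
    rw [Int.cast_natCast, hsaw₁, hsaw₂, if_neg hj0.ne']
    simp only [x]; field_simp; ring
  rw [ded_natCast_eq_sum_range, Finset.sum_congr rfl hterm, Finset.sum_sub_distrib,
    Finset.sum_ite_eq' (range N) 0, if_pos (mem_range.2 hN), ← Finset.sum_div,
    Finset.sum_sub_distrib, Finset.sum_add_distrib, sum_range_mul_mod ha (fun j => x j ^ 2),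
    ← Finset.sum_div]
  have hx : ∑ j ∈ range N, x j ^ 2 = (N - 1) * (2 * N - 1) / (6 * N) - (N - 1) / 2 + N / 4 := by
    have : ∀ j ∈ range N, x j ^ 2 = (j : ℝ) ^ 2 / N ^ 2 - (j : ℝ) / N + 1 / 4 := by
      intro j _; simp only [x]; ring
    rw [Finset.sum_congr rfl this, Finset.sum_add_distrib, Finset.sum_sub_distrib,
      ← Finset.sum_div, ← Finset.sum_div, sum_range_natCast_sq, sum_range_natCast]
    simp only [sum_const, card_range, nsmul_eq_mul]
    field_simp
  rw [hx]; field_simp; ring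

lemma one_add_mul_mul_add_mod {g h e b s u : ℕ} (hge : g = h * e) (hs : s < g) (hu : u < h) :
    (1 + g * b) * (s * h + u) % (g * h) = h * ((s + e * (b * u % h)) % g) + u := by
  have hq := Nat.div_add_mod (b * u) h
  have ht := Nat.div_add_mod (s + e * (b * u % h)) g
  have hlt : h * ((s + e * (b * u % h)) % g) + u < g * h := by
    have := Nat.mod_lt (s + e * (b * u % h)) (Nat.zero_lt_of_lt hs)
    nlinarith
  generalize b * u / h = q at hq
  generalize b * u % h = φ at hq ht hlt ⊢
  generalize (s + e * φ) / g = t at ht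
  generalize (s + e * φ) % g = x at ht hlt ⊢
  have hdecomp : (1 + g * b) * (s * h + u) = h * x + u + g * h * (b * s + q + t) := by
    subst hge
    zify at hq ht ⊢
    linear_combination -(h * e : ℤ) * hq - h * ht
  rw [hdecomp, Nat.add_mul_mod_self_left, Nat.mod_eq_of_lt hlt]

lemma sum_range_sub_one_add_mul_mod_sq {g h b : ℕ} (hg : 0 < g) (hhg : h ∣ g)
    (hb : b.Coprime h) :
    ∑ j ∈ range (g * h), ((j : ℝ) - ((1 + g * b) * j % (g * h) : ℕ)) ^ 2
      = g ^ 3 * h * (h ^ 2 - 1) / 6 := by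
  obtain ⟨e, hge⟩ := hhg
  have hh : 0 < h := Nat.pos_of_dvd_of_pos ⟨e, hge⟩ hg
  have hblock : ∀ u ∈ range h, ∑ s ∈ range g,
      (((s * h + u : ℕ) : ℝ) - ((1 + g * b) * (s * h + u) % (g * h) : ℕ)) ^ 2
        = h ^ 2 * (g * (e * (b * u % h) : ℕ) * (g - (e * (b * u % h) : ℕ))) := by
    intro u hu
    have hc : e * (b * u % h) ≤ g := by
      rw [hge, mul_comm h]; exact Nat.mul_le_mul_left _ (Nat.mod_lt _ hh).le
    rw [← sum_range_sub_add_mod_sq hc, Finset.mul_sum]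
    refine Finset.sum_congr rfl fun s hs => ?_
    rw [one_add_mul_mul_add_mod hge (mem_range.1 hs) (mem_range.1 hu)]
    push_cast; ring
  have hpoly : ∀ v ∈ range h, (h : ℝ) ^ 2 * (g * (e * v : ℕ) * (g - (e * v : ℕ)))
      = h ^ 2 * g ^ 2 * e * v - h ^ 2 * g * e ^ 2 * v ^ 2 := by
    intro v _; push_cast; ring
  rw [sum_range_mul_eq, Finset.sum_comm, Finset.sum_congr rfl hblock,
    sum_range_mul_mod hb (fun v => (h : ℝ) ^ 2 * (g * (e * v : ℕ) * (g - (e * v : ℕ)))),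
    Finset.sum_congr rfl hpoly, Finset.sum_sub_distrib, ← Finset.mul_sum, ← Finset.mul_sum,
    sum_range_natCast, sum_range_natCast_sq, hge]
  push_cast; ring

lemma Sded_one_add_mul {g h : ℕ} {b : ℤ} (hg : 0 < g) (hhg : h ∣ g) (hb : IsCoprime b h) :
    Sded (1 + g * b) (g * h : ℕ) = 2 / (g * h : ℕ) + (g : ℝ) ^ 2 / (g * h : ℕ) - 3 := by
  have hh : 0 < h := Nat.pos_of_dvd_of_pos hhg hg
  set b' := (b % h).toNat
  have hb' : (b' : ℤ) = b % h := Int.toNat_of_nonneg (Int.emod_nonneg _ (by positivity))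
  have hcongr : 1 + g * b ≡ ((1 + g * b' : ℕ) : ℤ) [ZMOD (g * h : ℕ)] := by
    push_cast
    rw [hb']
    exact ((Int.mod_modEq b h).symm.mul_left' (c := g)).add_left 1
  have hb'h : b'.Coprime h := by
    rwa [Nat.Coprime, ← Int.gcd_natCast_natCast, hb', Int.gcd_emod,
      ← Int.isCoprime_iff_gcd_eq_one]
  have hcop : (1 + g * b').Coprime (g * h) :=
    have hcop_g := (Nat.coprime_add_mul_left_left 1 g b').2 (Nat.coprime_one_left g)
    hcop_g.mul_right (hcop_g.coprime_dvd_right hhg)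
  rw [Sded, ded_congr hcongr, ded_natCast_eq_of_coprime (by positivity) hcop,
    sum_range_sub_one_add_mul_mod_sq hg hhg hb'h]
  push_cast
  field_simp
  ring

lemma pow_dvd_pow_mul_sq {l k r q : ℕ}
    (hcase : k ≤ 2 * r ∨ (2 * r < k ∧ l ^ (k - 2 * r) ∣ q ^ 2)) :
    l ^ k ∣ (l ^ r * q) ^ 2 := by
  rw [mul_pow, ← pow_mul, mul_comm r]
  rcases hcase with hle | ⟨hlt, hdvd⟩
  · exact (pow_dvd_pow l hle).mul_right _
  · rw [← Nat.add_sub_cancel' hlt.le, pow_add]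
    exact mul_dvd_mul_left _ hdvd

theorem rademacher_power_corollary_general (l k r q : ℕ) (hl : 0 < l)
    (hq : 0 < q) (hrk : r ≤ k) (hqdvd : q ∣ l ^ (k - r))
    (hcase : k ≤ 2 * r ∨ (2 * r < k ∧ l ^ (k - 2 * r) ∣ q ^ 2))
    (ε : ℤ) (hε : ε = 1 ∨ ε = -1) (m : ℤ)
    (hm : Int.gcd m ((l ^ (k - r) / q : ℕ) : ℤ) = 1) :
    Sded (ε + (l : ℤ) ^ r * (q : ℤ) * m) ((l : ℤ) ^ k) =
      (ε : ℝ) * (2 / (l : ℝ) ^ k + (l : ℝ) ^ (2 * (r : ℤ) - (k : ℤ)) * (q : ℝ) ^ 2 - 3) := by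
  set c := l ^ r * q
  set h := l ^ (k - r) / q
  have hc : 0 < c := by positivity
  have hN : l ^ k = c * h := by
    rw [mul_assoc, Nat.mul_div_cancel' hqdvd, ← pow_add, Nat.add_sub_cancel' hrk]
  have hhc : h ∣ c :=
    Nat.dvd_of_mul_dvd_mul_left hc (by rw [← hN, ← sq]; exact pow_dvd_pow_mul_sq hcase)
  have hm' : IsCoprime m h := Int.isCoprime_iff_gcd_eq_one.2 hm
  have hNZ : (l : ℤ) ^ k = (c * h : ℕ) := by rw [← hN]; push_cast; rfl
  have hNR : (l : ℝ) ^ k = (c * h : ℕ) := by rw [← hN]; push_cast; rfl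
  have hpow : (l : ℝ) ^ (2 * (r : ℤ) - k) * q ^ 2 = (c : ℝ) ^ 2 / (c * h : ℕ) := by
    rw [show 2 * (r : ℤ) = (2 * r : ℕ) by push_cast; rfl, zpow_sub₀ (by positivity),
      zpow_natCast, zpow_natCast, ← hNR]
    simp only [c]
    push_cast
    ring
  rw [hNZ, hNR, hpow]
  rcases hε with rfl | rfl
  · rw [show 1 + (l : ℤ) ^ r * q * m = 1 + c * m by simp only [c]; push_cast; ring,
      Sded_one_add_mul hc hhc hm']
    ring
  · rw [show -1 + (l : ℤ) ^ r * q * m = -(1 + c * -m) by simp only [c]; push_cast; ring,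
      Sded, ded_neg, mul_neg, ← Sded, Sded_one_add_mul hc hhc hm'.neg_left]
    push_cast; ring

theorem rademacher_power_corollary (l k r q : ℕ) (hl : 0 < l) (hk : 0 < k) (hr : 0 < r)
    (hq : 0 < q) (hrk : r ≤ k) (hqdvd : q ∣ l ^ (k - r)) (hlq : ¬ l ∣ q)
    (hcase : k ≤ 2 * r ∨ (2 * r < k ∧ l ^ (k - 2 * r) ∣ q ^ 2))
    (ε : ℤ) (hε : ε = 1 ∨ ε = -1) (m : ℤ)
    (hm : Int.gcd m ((l ^ (k - r) / q : ℕ) : ℤ) = 1) :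
    Sded (ε + (l : ℤ) ^ r * (q : ℤ) * m) ((l : ℤ) ^ k) =
      (ε : ℝ) * (2 / (l : ℝ) ^ k + (l : ℝ) ^ (2 * (r : ℤ) - (k : ℤ)) * (q : ℝ) ^ 2 - 3) :=
  rademacher_power_corollary_general l k r q hl hq hrk hqdvd hcase ε hε m hm
end

section
/- Let n be a positive integer, m an integer with gcd(m, n) = 1, m* an integer with m·m* ≡ 1 (mod n), and t a positive integer with t ≡ m − m* (mod n). Then S(1 + m·t, n·t) = 2/(n·t) + t/n − 3. -/
open scoped Classical
open Finset

/-!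
Put `a = 1 + m t` and `N = n t`; `a` is a unit mod `N`, and since `((k/N)) = (k mod N)/N - 1/2`
away from multiples of `N`, `s(a, N) = Q / N² - (N - 1) / 4` with `Q = ∑_{j < N} j · (a j mod N)`.
Writing `j = n c + r`, one has `a j ≡ n c + r + t ρ (mod N)` with `ρ = m r mod n`, so the inner sum
over `c` is a polynomial in `r`, `ρ` and `τ = (r + t ρ) mod n`. The hypothesis `t ≡ m - m*` gives
`a ≡ m² (mod n)`, i.e. `τ = m ρ mod n`. Multiplication by `m` permutes the residues mod `n`, so the
cross term `∑ ρ τ` equals `∑ r ρ` and cancels, and what is left is a sum of powers of `r`: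
`12 Q = 3 N³ - 6 N² + (2 + t²) N`.
-/

section IntervalSums

variable {M : Type*}

theorem sum_Ico_eq_sub_of_forall [AddCommGroup M] {f F : ℤ → M} (hf : ∀ c, f c = F (c + 1) - F c)
    {a b : ℤ} (hab : a ≤ b) : ∑ c ∈ Ico a b, f c = F b - F a := by
  induction b, hab using Int.leInduction with
  | base => simp
  | succ b hab ih =>
    rw [← insert_Ico_right_eq_Ico_add_one hab, sum_insert right_notMem_Ico, ih, hf]
    abel

theorem sum_Ico_id_mul_two (N : ℤ) (hN : 0 ≤ N) : 2 * ∑ k ∈ Ico 0 N, k = N * (N - 1) := by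
  rw [mul_sum, sum_Ico_eq_sub_of_forall (F := fun k => k * (k - 1)) (fun k => by ring) hN]
  ring

theorem sum_Ico_mul_eq_sum_sum [AddCommMonoid M] (f : ℤ → M) {n t : ℤ} (hn : 0 ≤ n)
    (ht : 0 ≤ t) : ∑ j ∈ Ico 0 (n * t), f j = ∑ c ∈ Ico 0 t, ∑ r ∈ Ico 0 n, f (n * c + r) := by
  induction t, ht using Int.leInduction with
  | base => simp
  | succ t ht ih =>
    rw [mul_add_one, ← Ico_union_Ico_eq_Ico (b := n * t) (by positivity) (by linarith),
      sum_union (Ico_disjoint_Ico_consecutive _ _ _), ih, ← insert_Ico_right_eq_Ico_add_one ht,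
      sum_insert right_notMem_Ico, sum_Ico_add, zero_add, add_comm n, add_comm]

theorem sum_Ico_comp_mul_emod [AddCommMonoid M] {n u v : ℤ} (hn : 0 < n)
    (huv : u * v ≡ 1 [ZMOD n]) (g : ℤ → M) :
    ∑ r ∈ Ico 0 n, g (u * r % n) = ∑ r ∈ Ico 0 n, g r := by
  have hmem (w r : ℤ) : w * r % n ∈ Ico 0 n :=
    mem_Ico.2 ⟨Int.emod_nonneg _ hn.ne', Int.emod_lt_of_pos _ hn⟩
  have hinv {w w' : ℤ} (h : w * w' ≡ 1 [ZMOD n]) (r : ℤ) (hr : r ∈ Ico 0 n) :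
      w' * (w * r % n) % n = r := by
    have : w' * (w * r % n) ≡ r [ZMOD n] := calc
      w' * (w * r % n) ≡ w' * (w * r) [ZMOD n] := (Int.mod_modEq _ _).mul_left _
      _ = w * w' * r := by ring
      _ ≡ 1 * r [ZMOD n] := h.mul_right _
      _ = r := one_mul r
    rw [this, Int.emod_eq_of_lt (mem_Ico.1 hr).1 (mem_Ico.1 hr).2]
  exact sum_nbij' (u * · % n) (v * · % n) (fun r _ => hmem u r) (fun r _ => hmem v r)
    (hinv huv) (hinv (by rwa [mul_comm])) (fun _ _ => rfl)

end IntervalSums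

theorem saw_intCast_div {k N : ℤ} (hN : 0 < N) (hk : ¬ N ∣ k) :
    saw ((k : ℝ) / N) = ((k % N : ℤ) : ℝ) / N - 1 / 2 := by
  have hN' : (N : ℝ) ≠ 0 := by positivity
  have hfrac : ¬ ∃ z : ℤ, (z : ℝ) = k / N := by
    rintro ⟨z, hz⟩
    refine hk ⟨z, ?_⟩
    rw [eq_div_iff hN'] at hz
    exact_mod_cast hz.symm.trans (mul_comm _ _)
  rw [saw, if_neg hfrac, Int.floor_div_cast_of_nonneg hN.le, Int.floor_intCast, Int.emod_def]
  push_cast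
  field_simp

theorem saw_div_mul_saw_mul_div {a N k : ℤ} (hN : 0 < N) (ha : IsCoprime a N) (hk : k ∈ Ico 1 N) :
    saw (k / N) * saw (a * k / N) =
      (((2 * k - N) * (2 * (a * k % N) - N) : ℤ) : ℝ) / (4 * N ^ 2) := by
  obtain ⟨hk1, hkN⟩ := mem_Ico.1 hk
  have hndvd : ¬ N ∣ k := fun h => by linarith [Int.le_of_dvd (by linarith) h]
  have hndvd' : ¬ N ∣ a * k := fun h => hndvd (ha.symm.dvd_of_dvd_mul_left h)
  rw [← Int.cast_mul, saw_intCast_div hN hndvd, saw_intCast_div hN hndvd',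
    Int.emod_eq_of_lt (by linarith) hkN]
  field_simp
  push_cast
  ring

theorem ded_eq_sum_mul_emod {a N : ℤ} (hN : 0 < N) (ha : IsCoprime a N) :
    ded a N = ((∑ k ∈ Ico 0 N, k * (a * k % N) : ℤ) : ℝ) / (N : ℝ) ^ 2 - ((N : ℝ) - 1) / 4 := by
  obtain ⟨u, v, huv⟩ := id ha
  have hau : a * u ≡ 1 [ZMOD N] := Int.modEq_iff_dvd.2 ⟨v, by linear_combination -huv⟩
  have hsum : ∑ k ∈ Ico 1 N, (2 * k - N) * (2 * (a * k % N) - N) =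
      4 * ∑ k ∈ Ico 0 N, k * (a * k % N) - 2 * N ^ 2 * (N - 1) + N ^ 3 - N ^ 2 := by
    have hperm : ∑ k ∈ Ico 0 N, a * k % N = ∑ k ∈ Ico 0 N, k := sum_Ico_comp_mul_emod hN hau id
    have hgauss := sum_Ico_id_mul_two N hN.le
    have hexpand : ∑ k ∈ Ico 0 N, (2 * k - N) * (2 * (a * k % N) - N) =
        ∑ k ∈ Ico 0 N, (4 * (k * (a * k % N)) - 2 * N * k - 2 * N * (a * k % N) + N ^ 2) :=
      sum_congr rfl fun k _ => by ring
    rw [sum_add_distrib, sum_sub_distrib, sum_sub_distrib, ← mul_sum, ← mul_sum, ← mul_sum, hperm,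
      sum_const, Int.card_Ico, sub_zero, nsmul_eq_mul, Int.toNat_of_nonneg hN.le] at hexpand
    have hsplit : ∑ k ∈ Ico 0 N, (2 * k - N) * (2 * (a * k % N) - N) =
        N ^ 2 + ∑ k ∈ Ico 1 N, (2 * k - N) * (2 * (a * k % N) - N) := by
      rw [← insert_Ico_add_one_left_eq_Ico hN, sum_insert (by simp)]
      simp [sq]
    linear_combination hexpand - hsplit - 2 * N * hgauss
  have hsaw1 : saw 1 = 0 := if_pos ⟨1, Int.cast_one⟩
  rw [ded, ← Ico_insert_right (by linarith : 1 ≤ N), sum_insert right_notMem_Ico,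
    div_self (by positivity), hsaw1, zero_mul, zero_add,
    sum_congr rfl fun k hk => saw_div_mul_saw_mul_div hN ha hk, ← sum_div,
    ← Int.cast_sum, hsum]
  push_cast
  field_simp
  ring

theorem emod_mul_add_eq_sub_ite {n t q τ c : ℤ} (hn : 0 < n) (hqt : q ≤ t) (hτ : 0 ≤ τ)
    (hτn : τ < n) (hc : 0 ≤ c + q) (hct : c < t) :
    (n * (c + q) + τ) % (n * t) = n * (c + q) + τ - if t - q ≤ c then n * t else 0 := by
  split_ifs with h
  · rw [← Int.sub_emod_right]
    exact Int.emod_eq_of_lt (by nlinarith) (by nlinarith)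
  · exact (Int.emod_eq_of_lt (by nlinarith) (by nlinarith)).trans (sub_zero _).symm

theorem six_mul_sum_Ico_mul_emod {n t q τ : ℤ} (hn : 0 < n) (hq : 0 ≤ q) (hqt : q ≤ t)
    (hτ : 0 ≤ τ) (hτn : τ < n) (r : ℤ) :
    6 * ∑ c ∈ Ico 0 t, (n * c + r) * ((n * (c + q) + τ) % (n * t)) =
      n ^ 2 * t * (t - 1) * (2 * t - 1) + 3 * n * t * (t - 1) * (r + n * q + τ)
        + 6 * t * r * (n * q + τ) - 3 * t * (n * q) * (2 * n * t - n * q - n)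
        - 6 * t * (n * q) * r := by
  have hsplit : ∀ c ∈ Ico 0 t, (n * c + r) * ((n * (c + q) + τ) % (n * t)) =
      (n * c + r) * (n * (c + q) + τ) - if t - q ≤ c then (n * c + r) * (n * t) else 0 := by
    intro c hc
    obtain ⟨hc0, hct⟩ := mem_Ico.1 hc
    rw [emod_mul_add_eq_sub_ite hn hqt hτ hτn (by linarith) hct, mul_sub, mul_ite, mul_zero]
  rw [sum_congr rfl hsplit, sum_sub_distrib, ← sum_filter, Ico_filter_le,
    max_eq_right (by linarith)]
  have hall : 6 * ∑ c ∈ Ico 0 t, (n * c + r) * (n * (c + q) + τ) =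
      n ^ 2 * t * (t - 1) * (2 * t - 1) + 3 * n * t * (t - 1) * (r + n * q + τ)
        + 6 * t * r * (n * q + τ) := by
    rw [mul_sum, sum_Ico_eq_sub_of_forall (F := fun c => n ^ 2 * c * (c - 1) * (2 * c - 1)
      + 3 * n * c * (c - 1) * (r + n * q + τ) + 6 * c * r * (n * q + τ)) (fun c => by ring)
      (hq.trans hqt)]
    ring
  have htop : 2 * ∑ c ∈ Ico (t - q) t, (n * c + r) * (n * t) =
      n * t * (n * q * (2 * t - q - 1) + 2 * q * r) := by
    rw [mul_sum, sum_Ico_eq_sub_of_forall (F := fun c => n * t * (n * c * (c - 1) + 2 * c * r))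
      (fun c => by ring) (by linarith)]
    ring
  linear_combination hall - 3 * htop

theorem one_add_mul_modEq_sq {n m mstar t : ℤ} (hinv : m * mstar ≡ 1 [ZMOD n])
    (htc : t ≡ m - mstar [ZMOD n]) : 1 + m * t ≡ m ^ 2 [ZMOD n] := calc
  1 + m * t ≡ 1 + m * (m - mstar) [ZMOD n] := (htc.mul_left m).add_left 1
  _ = m ^ 2 + (1 - m * mstar) := by ring
  _ ≡ m ^ 2 + (1 - 1) [ZMOD n] := ((Int.ModEq.refl 1).sub hinv).add_left _
  _ = m ^ 2 := by ring

theorem six_mul_sum_Ico_mul_one_add_mul_emod {n m mstar t r : ℤ} (hn : 0 < n) (ht : 0 < t)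
    (hinv : m * mstar ≡ 1 [ZMOD n]) (htc : t ≡ m - mstar [ZMOD n]) (hr : r ∈ Ico 0 n) :
    6 * ∑ c ∈ Ico 0 t, (n * c + r) * ((1 + m * t) * (n * c + r) % (n * t)) =
      n ^ 2 * t * (t - 1) * (2 * t - 1) - 3 * n * t * r + 3 * t * r ^ 2
        + (3 * t ^ 3 * (m * r % n) ^ 2 - 3 * n * t ^ 3 * (m * r % n))
        + (3 * t * (m * (m * r % n) % n) ^ 2 + 3 * n * t * (2 * t - 1) * (m * (m * r % n) % n))
        + 6 * t ^ 2 * (r * (m * r % n) - m * r % n * (m * (m * r % n) % n)) := by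
  obtain ⟨hr0, hrn⟩ := mem_Ico.1 hr
  set ρ := m * r % n
  set s := r + t * ρ
  have hρ0 : 0 ≤ ρ := Int.emod_nonneg _ hn.ne'
  have hρn : ρ < n := Int.emod_lt_of_pos _ hn
  have hρdiv : n * (m * r / n) + ρ = m * r := Int.mul_ediv_add_emod _ _
  have hsdiv : n * (s / n) + s % n = s := Int.mul_ediv_add_emod _ _
  have hτ : s % n = m * ρ % n := calc
    s ≡ r + t * (m * r) [ZMOD n] := ((Int.mod_modEq _ _).mul_left t).add_left r
    _ = (1 + m * t) * r := by ring
    _ ≡ m ^ 2 * r [ZMOD n] := (one_add_mul_modEq_sq hinv htc).mul_right r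
    _ = m * (m * r) := by ring
    _ ≡ m * ρ [ZMOD n] := ((Int.mod_modEq _ _).mul_left m).symm
  have hmod (c : ℤ) : (1 + m * t) * (n * c + r) % (n * t) = (n * (c + s / n) + s % n) % (n * t) :=
    Int.modEq_iff_dvd.2 ⟨-(m * r / n) - m * c, by linear_combination hsdiv + t * hρdiv⟩
  have hq : 0 ≤ s / n := Int.ediv_nonneg (by positivity) hn.le
  have hqt : s / n ≤ t := Int.lt_add_one_iff.1 (Int.ediv_lt_of_lt_mul hn (by nlinarith))
  rw [sum_congr rfl fun c _ => by rw [hmod c], six_mul_sum_Ico_mul_emod hn hq hqt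
    (Int.emod_nonneg _ hn.ne') (Int.emod_lt_of_pos _ hn) r, hτ,
    show n * (s / n) = s - m * ρ % n by linear_combination hsdiv - hτ]
  ring

theorem sum_Ico_comp_mul_emod_add_cross {n m mstar : ℤ} (hn : 0 < n)
    (hinv : m * mstar ≡ 1 [ZMOD n]) (A B C : ℤ → ℤ) (k : ℤ) :
    ∑ r ∈ Ico 0 n, (A r + B (m * r % n) + C (m * (m * r % n) % n)
        + k * (r * (m * r % n) - m * r % n * (m * (m * r % n) % n))) =
      ∑ r ∈ Ico 0 n, (A r + B r + C r) := by
  have perm (g : ℤ → ℤ) := sum_Ico_comp_mul_emod hn hinv g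
  have hC : ∑ r ∈ Ico 0 n, C (m * (m * r % n) % n) = ∑ r ∈ Ico 0 n, C r :=
    (perm fun x => C (m * x % n)).trans (perm C)
  have hcross : ∑ r ∈ Ico 0 n, m * r % n * (m * (m * r % n) % n) =
      ∑ r ∈ Ico 0 n, r * (m * r % n) :=
    perm fun x => x * (m * x % n)
  simp only [sum_add_distrib, ← mul_sum, sum_sub_distrib, perm B, hC, hcross, sub_self, mul_zero,
    add_zero]

theorem twelve_mul_sum_mul_one_add_mul_emod {n m mstar t : ℤ} (hn : 0 < n) (ht : 0 < t)
    (hinv : m * mstar ≡ 1 [ZMOD n]) (htc : t ≡ m - mstar [ZMOD n]) :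
    12 * ∑ j ∈ Ico 0 (n * t), j * ((1 + m * t) * j % (n * t)) =
      3 * (n * t) ^ 3 - 6 * (n * t) ^ 2 + (2 + t ^ 2) * (n * t) := by
  rw [sum_Ico_mul_eq_sum_sum _ hn.le ht.le, sum_comm]
  have hres := sum_Ico_comp_mul_emod_add_cross hn hinv
    (fun r => n ^ 2 * t * (t - 1) * (2 * t - 1) - 3 * n * t * r + 3 * t * r ^ 2)
    (fun x => 3 * t ^ 3 * x ^ 2 - 3 * n * t ^ 3 * x)
    (fun x => 3 * t * x ^ 2 + 3 * n * t * (2 * t - 1) * x) (6 * t ^ 2)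
  rw [← sum_congr rfl fun r hr => six_mul_sum_Ico_mul_one_add_mul_emod hn ht hinv htc hr,
    ← mul_sum] at hres
  have hsum : 2 * ∑ r ∈ Ico 0 n, (n ^ 2 * t * (t - 1) * (2 * t - 1) - 3 * n * t * r
      + 3 * t * r ^ 2 + (3 * t ^ 3 * r ^ 2 - 3 * n * t ^ 3 * r)
      + (3 * t * r ^ 2 + 3 * n * t * (2 * t - 1) * r)) =
      3 * (n * t) ^ 3 - 6 * (n * t) ^ 2 + (2 + t ^ 2) * (n * t) := by
    rw [mul_sum, sum_Ico_eq_sub_of_forall (F := fun r => 2 * r * (n ^ 2 * t * (t - 1) * (2 * t - 1))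
      - 3 * n * t * (t ^ 2 - 2 * t + 2) * r * (r - 1) + t * (t ^ 2 + 2) * r * (r - 1) * (2 * r - 1))
      (fun r => by ring) hn.le]
    ring
  linear_combination 2 * hres + hsum

theorem isCoprime_one_add_mul_mul {n m mstar t : ℤ} (hinv : m * mstar ≡ 1 [ZMOD n])
    (htc : t ≡ m - mstar [ZMOD n]) : IsCoprime (1 + m * t) (n * t) := by
  obtain ⟨α, hα⟩ := htc.dvd
  obtain ⟨β, hβ⟩ := hinv.dvd
  exact ⟨1 - mstar * t, -(α + t * β), by linear_combination t * hα + t ^ 2 * hβ⟩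

theorem square_free_equal_dedekind_sums_general (n : ℤ) (hn : 0 < n) (m mstar : ℤ)
    (hinv : m * mstar ≡ 1 [ZMOD n])
    (t : ℤ) (ht : 0 < t) (htc : t ≡ m - mstar [ZMOD n]) :
    Sded (1 + m * t) (n * t) = 2 / ((n : ℝ) * t) + (t : ℝ) / n - 3 := by
  rw [Sded, ded_eq_sum_mul_emod (mul_pos hn ht) (isCoprime_one_add_mul_mul hinv htc)]
  set Q := ∑ j ∈ Ico 0 (n * t), j * ((1 + m * t) * j % (n * t))
  have hQ : 12 * (Q : ℝ) = 3 * (n * t) ^ 3 - 6 * (n * t) ^ 2 + (2 + t ^ 2) * (n * t) := by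
    exact_mod_cast twelve_mul_sum_mul_one_add_mul_emod hn ht hinv htc
  push_cast
  field_simp
  linear_combination 4 * hQ

theorem square_free_equal_dedekind_sums (n : ℤ) (hn : 0 < n) (m mstar : ℤ)
    (hm : Int.gcd m n = 1) (hinv : m * mstar ≡ 1 [ZMOD n])
    (t : ℤ) (ht : 0 < t) (htc : t ≡ m - mstar [ZMOD n]) :
    Sded (1 + m * t) (n * t) = 2 / ((n : ℝ) * t) + (t : ℝ) / n - 3 :=
  square_free_equal_dedekind_sums_general n hn m mstar hinv t ht htc
end
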